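/- Let ⟨Z_n,{a,b}⟩ be a standardized DFA, r ≠ 0 with r·a = dupl(a), D₁ the difference set, H₁ = ⟨D₁⟩. Then ⟨r⟩ ⊆ D₁ ∪ {0} ⊆ H₁, and moreover D₁ ∪ {0} is invariant under the action of a. -/

import Mathlib

/-!
`a` maps `{0}ᶜ` onto `{0}ᶜ`, hence (by finiteness) permutes it, and because `a r = a 0` so does
`x ↦ a (x + r)`, the action of the word `bʳa`. Appending a word that permutes `{0}ᶜ` to a word of
defect 1 with excluded state `0` keeps the excluded state and moves the duplicate state along, so
`D₁` is invariant under both maps. As `D₁ ⊆ {0}ᶜ` is finite and `a` is injective there, `D₁` is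
also closed under preimages in `{0}ᶜ` under `a`. Hence `a (x + r) ∈ D₁` for `x ∈ D₁ ∪ {0}` yields
`x + r ∈ D₁ ∪ {0}`, and `D₁ ∪ {0}` contains all multiples of `r`.
-/

def act {n : ℕ} (a : ZMod n → ZMod n) (q : ZMod n) (c : Bool) : ZMod n :=
  if c then q + 1 else a q

def wact {n : ℕ} (a : ZMod n → ZMod n) (w : List Bool) (q : ZMod n) : ZMod n :=
  w.foldl (act a) q

def excl {n : ℕ} (a : ZMod n → ZMod n) (w : List Bool) : Set (ZMod n) :=
  {q | ∀ p, wact a w p ≠ q}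

def dupl {n : ℕ} (a : ZMod n → ZMod n) (w : List Bool) : Set (ZMod n) :=
  {p | ∃ q₁ q₂, q₁ ≠ q₂ ∧ wact a w q₁ = p ∧ wact a w q₂ = p}

def CompletelyReachable {n : ℕ} (a : ZMod n → ZMod n) : Prop :=
  ∀ S : Set (ZMod n), S.Nonempty → ∃ w : List Bool, Set.range (wact a w) = S

def Standardized {n : ℕ} (a : ZMod n → ZMod n) : Prop :=
  Set.range a = {(0 : ZMod n)}ᶜ ∧ ∃ r : ZMod n, r ≠ 0 ∧ a r = a 0

def RysEdge {n : ℕ} (a : ZMod n → ZMod n) (q p : ZMod n) : Prop :=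
  ∃ w : List Bool, excl a w = {q} ∧ dupl a w = {p}

def D1 {n : ℕ} (a : ZMod n → ZMod n) : Set (ZMod n) :=
  {p | RysEdge a 0 p}

open Set Function

theorem AddSubgroup.closure_singleton_subset_of_add_mem {G : Type*} [AddGroup G] [Finite G]
    {S : Set G} {r : G} (h0 : 0 ∈ S) (hS : ∀ x ∈ S, x + r ∈ S) :
    (closure {r} : Set G) ⊆ S := by
  intro x hx
  rw [SetLike.mem_coe, ← zmultiples_eq_closure, ← mem_multiples_iff_mem_zmultiples] at hx
  obtain ⟨k, rfl⟩ := hx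
  induction k with
  | zero => simpa using h0
  | succ k ih => simpa only [succ_nsmul] using hS _ ih

section ComplSingleton

variable {α : Type*} {f : α → α}

theorem image_compl_singleton_eq_range {c c' : α} (hne : c' ≠ c) (hf : f c' = f c) :
    f '' {c}ᶜ = range f := by
  refine (image_subset_range f _).antisymm ?_
  rintro _ ⟨x, rfl⟩
  by_cases hx : x = c
  · exact ⟨c', hne, by rw [hf, hx]⟩
  · exact ⟨x, hx, rfl⟩

theorem bijOn_compl_singleton_of_range_eq [Finite α] {c c' z : α} (hne : c' ≠ c)
    (hf : f c' = f c) (hrange : range f = {z}ᶜ) : BijOn f {c}ᶜ {z}ᶜ := by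
  have himage : f '' {c}ᶜ = {z}ᶜ := (image_compl_singleton_eq_range hne hf).trans hrange
  have hinj : InjOn f {c}ᶜ :=
    injOn_of_ncard_image_eq (by rw [himage, ncard_compl, ncard_compl, ncard_singleton,
      ncard_singleton])
  exact himage ▸ hinj.bijOn_image

theorem mem_of_apply_mem_of_mapsTo [Finite α] {s t : Set α} (hts : t ⊆ s) (hf : InjOn f s)
    (hmaps : MapsTo f t t) {y : α} (hy : y ∈ s) (hfy : f y ∈ t) : y ∈ t := by
  have hbij : BijOn f t t := (toFinite t).injOn_iff_bijOn_of_mapsTo hmaps |>.1 (hf.mono hts)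
  obtain ⟨z, hz, hzy⟩ := hbij.surjOn hfy
  rwa [← hf (hts hz) hy hzy]

end ComplSingleton

section Words

variable {n : ℕ} (a : ZMod n → ZMod n)

theorem wact_append (w v : List Bool) : wact a (w ++ v) = wact a v ∘ wact a w :=
  funext fun _ => List.foldl_append ..

theorem wact_false : wact a [false] = a := rfl

theorem wact_replicate_true (m : ℕ) : wact a (List.replicate m true) = (· + (m : ZMod n)) := by
  induction m with
  | zero => funext q; simp [wact]
  | succ m ih =>
    rw [List.replicate_succ', wact_append, ih]
    funext q
    simp [wact, act, add_assoc]

theorem excl_eq_compl_range (w : List Bool) : excl a w = (range (wact a w))ᶜ := by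
  ext q
  simp [excl]

theorem excl_eq_singleton_iff (w : List Bool) {q : ZMod n} :
    excl a w = {q} ↔ range (wact a w) = {q}ᶜ := by
  rw [excl_eq_compl_range, compl_eq_comm, eq_comm]

theorem dupl_subset_range (w : List Bool) : dupl a w ⊆ range (wact a w) :=
  fun _ ⟨q, _, _, hq, _⟩ => ⟨q, hq⟩

theorem dupl_append_of_injOn {w v : List Bool} (hv : InjOn (wact a v) (range (wact a w))) :
    dupl a (w ++ v) = wact a v '' dupl a w := by
  ext p
  simp only [dupl, wact_append, comp_apply, mem_ofPred_eq, mem_image]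
  constructor
  · rintro ⟨q₁, q₂, hne, rfl, h⟩
    exact ⟨wact a w q₁, ⟨q₁, q₂, hne, rfl, hv ⟨q₂, rfl⟩ ⟨q₁, rfl⟩ h⟩, rfl⟩
  · rintro ⟨_, ⟨q₁, q₂, hne, rfl, h⟩, rfl⟩
    exact ⟨q₁, q₂, hne, rfl, by rw [h]⟩

variable {a}

theorem RysEdge.ne {q p : ZMod n} (h : RysEdge a q p) : p ≠ q := by
  obtain ⟨w, hexcl, hdupl⟩ := h
  have hp : p ∈ range (wact a w) := dupl_subset_range a w (hdupl ▸ mem_singleton p)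
  rw [(excl_eq_singleton_iff a w).1 hexcl] at hp
  exact hp

theorem RysEdge.append {q q' p : ZMod n} {v : List Bool} (h : RysEdge a q p)
    (hv : BijOn (wact a v) {q}ᶜ {q'}ᶜ) : RysEdge a q' (wact a v p) := by
  obtain ⟨w, hexcl, hdupl⟩ := h
  have hrange := (excl_eq_singleton_iff a w).1 hexcl
  refine ⟨w ++ v, ?_, ?_⟩
  · rw [excl_eq_singleton_iff, wact_append, range_comp, hrange, hv.image_eq]
  · rw [dupl_append_of_injOn a (hrange ▸ hv.injOn), hdupl, image_singleton]

end Words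

section Standardized

variable {n : ℕ} [NeZero n] {a : ZMod n → ZMod n} {r : ZMod n}
  (h1 : range a = {0}ᶜ) (hr : r ≠ 0) (hra : a r = a 0)
include h1 hr hra

theorem bijOn_compl_zero : BijOn a {0}ᶜ {0}ᶜ :=
  bijOn_compl_singleton_of_range_eq hr hra h1

theorem bijOn_add_compl_zero : BijOn (fun x => a (x + r)) {0}ᶜ {0}ᶜ :=
  bijOn_compl_singleton_of_range_eq (neg_ne_zero.2 hr) (by simp [hra])
    (by rw [← h1]; exact (add_right_surjective r).range_comp a)

theorem dupl_singleton_false : dupl a [false] = {a 0} := by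
  refine subset_antisymm ?_ (singleton_subset_iff.2 ⟨r, 0, hr, hra, rfl⟩)
  rintro _ ⟨x, y, hxy, rfl, h⟩
  by_contra hx
  have hx0 : x ≠ 0 := by rintro rfl; exact hx rfl
  have hy0 : y ≠ 0 := by rintro rfl; exact hx h.symm
  exact hxy ((bijOn_compl_zero h1 hr hra).injOn hx0 hy0 h.symm)

theorem apply_zero_mem_D1 : a 0 ∈ D1 a :=
  ⟨[false], by rw [excl_eq_singleton_iff, wact_false, h1], dupl_singleton_false h1 hr hra⟩

theorem mapsTo_D1 : MapsTo a (D1 a) (D1 a) :=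
  fun _ hp => RysEdge.append (v := [false]) hp (bijOn_compl_zero h1 hr hra)

theorem mapsTo_add_D1 : MapsTo (fun x => a (x + r)) (D1 a) (D1 a) := by
  intro p hp
  have hv : wact a (List.replicate r.val true ++ [false]) = fun x => a (x + r) := by
    rw [wact_append, wact_replicate_true, wact_false, ZMod.natCast_zmod_val]; rfl
  exact hv ▸ RysEdge.append hp (hv ▸ bijOn_add_compl_zero h1 hr hra)

theorem mem_D1_of_apply_mem {y : ZMod n} (hy : y ≠ 0) (h : a y ∈ D1 a) : y ∈ D1 a :=
  mem_of_apply_mem_of_mapsTo (fun _ hp => RysEdge.ne hp) (bijOn_compl_zero h1 hr hra).injOn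
    (mapsTo_D1 h1 hr hra) hy h

theorem add_mem_D1_union_zero {x : ZMod n} (hx : x ∈ D1 a ∪ {0}) : x + r ∈ D1 a ∪ {0} := by
  by_cases hxr : x + r = 0
  · exact Or.inr hxr
  refine Or.inl (mem_D1_of_apply_mem h1 hr hra hxr ?_)
  rcases hx with hx | rfl
  · exact mapsTo_add_D1 h1 hr hra hx
  · rw [zero_add, hra]; exact apply_zero_mem_D1 h1 hr hra

end Standardized

theorem inclusions_and_invariance {n : ℕ} (hn : 2 ≤ n) (a : ZMod n → ZMod n)
    (h1 : Set.range a = {(0 : ZMod n)}ᶜ)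
    (r : ZMod n) (hr : r ≠ 0) (hra : a r = a 0) :
    (AddSubgroup.closure {r} : Set (ZMod n)) ⊆ D1 a ∪ {0} ∧
    D1 a ∪ {0} ⊆ (AddSubgroup.closure (D1 a) : Set (ZMod n)) ∧
    (∀ d ∈ D1 a ∪ {0}, a d ∈ D1 a ∪ {0}) := by
  have : NeZero n := ⟨by omega⟩
  refine ⟨?_, ?_, ?_⟩
  · exact AddSubgroup.closure_singleton_subset_of_add_mem (Or.inr rfl)
      fun _ => add_mem_D1_union_zero h1 hr hra
  · exact union_subset AddSubgroup.subset_closure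
      (singleton_subset_iff.2 (AddSubgroup.zero_mem _))
  · rintro d (hd | rfl)
    · exact Or.inl (mapsTo_D1 h1 hr hra hd)
    · exact Or.inl (apply_zero_mem_D1 h1 hr hra)
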